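/- Let n ≥ 3 and let i be an integer with 1 ≤ i ≤ n−2. For every permutation p of {1,…,n}, exactly one of the three entries p_i, p_{i+1}, p_{i+2} is an ancestor in T^m_p of the other two (equivalently, among these three entries there is a unique one closest to the root, the i-th local extremum e_i of p). -/

import Mathlib

/-- Binary trees with natural-number labels, used to model minmax trees of
permutations. -/
inductive BTree where
  | nil : BTree
  | node : ℕ → BTree → BTree → BTree
deriving DecidableEq, Repr

namespace BTree

/-- The label of the root (if any). -/
def rootVal : BTree → Option ℕ
  | .nil => none
  | .node v _ _ => some v

/-- Whether the value `x` occurs as a label in the tree. -/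
def memB : BTree → ℕ → Bool
  | .nil, _ => false
  | .node v l r, x => (x == v) || memB l x || memB r x

/-- The number of children of the (unique, for permutations) node labelled `x`. -/
def numChildren : BTree → ℕ → ℕ
  | .nil, _ => 0
  | .node v l r, x =>
      if x = v then (if l = .nil then 0 else 1) + (if r = .nil then 0 else 1)
      else numChildren l x + numChildren r x

/-- `x` is a leaf of the tree: it occurs in the tree and has no children. -/
def IsLeaf (t : BTree) (x : ℕ) : Prop := t.memB x = true ∧ t.numChildren x = 0

instance (t : BTree) (x : ℕ) : Decidable (t.IsLeaf x) := by unfold IsLeaf; infer_instance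

/-- `childB t x y = true` iff `x` is a child of `y` in `t`, i.e. `x` is the root of
the left or the right subtree hanging from `y`. -/
def childB : BTree → ℕ → ℕ → Bool
  | .nil, _, _ => false
  | .node v l r, x, y =>
      ((y == v) && (l.rootVal == some x || r.rootVal == some x))
      || childB l x y || childB r x y

/-- `ancB t x y = true` iff `x` is a (strict) ancestor of `y` in `t`, i.e. `y` lies
in a subtree hanging from `x`. -/
def ancB : BTree → ℕ → ℕ → Bool
  | .nil, _, _ => false
  | .node v l r, x, y =>
      ((x == v) && (memB l y || memB r y)) || ancB l x y || ancB r x y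

end BTree

/-- `x` is the leftmost-eligible extreme letter of `l`: the minimum or the maximum. -/
def isExtreme (l : List ℕ) (x : ℕ) : Bool :=
  (l.min? == some x) || (l.max? == some x)

/-- Fuelled construction of the minmax tree of a list of distinct naturals:
split the list as `u ++ [m] ++ v` where `m` is the leftmost of the minimum and
maximum letters, put `m` at the root and recurse on `u` (left) and `v` (right). -/
def mmAux : ℕ → List ℕ → BTree
  | 0, _ => .nil
  | fuel+1, l =>
    if l.isEmpty then .nil
    else
      let k := l.findIdx (isExtreme l)
      .node (l.getD k 0) (mmAux fuel (l.take k)) (mmAux fuel (l.drop (k+1)))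

/-- The minmax tree `T^m_p` of a word `l` (with distinct letters). -/
def minmaxTree (l : List ℕ) : BTree := mmAux l.length l

/-- The word `p_1 p_2 … p_n` on the letters `{1,…,n}` associated to a permutation
`p` of `Fin n`. -/
def permList (n : ℕ) (p : Equiv.Perm (Fin n)) : List ℕ :=
  List.ofFn (fun i => (p i : ℕ) + 1)

/-- The `i`-th entry `p_i` (1-indexed) of the permutation `p`. -/
def entryAt (n : ℕ) (p : Equiv.Perm (Fin n)) (i : ℕ) : ℕ :=
  (permList n p).getD (i - 1) 0

/-! The minmax tree of a word `u m v` has root `m` and subtrees built from `u` and `v`, so its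
in-order reading is the word itself. In any binary tree with distinct labels, a nonempty factor of
the in-order reading either lies inside one of the two subtrees or contains the root; by induction
it therefore contains an ancestor of all its other letters, and that letter is unique because the
ancestor relation is asymmetric. Three consecutive entries `p_i p_{i+1} p_{i+2}` form such a
factor. -/

namespace List

theorem infix_or_infix_or_mem_of_infix_append_cons {α : Type*} {s l₁ l₂ : List α} {a : α}
    (h : s <:+: l₁ ++ a :: l₂) : s <:+: l₁ ∨ s <:+: l₂ ∨ a ∈ s := by
  rcases infix_append_iff.1 h with h | h | ⟨s₁, s₂, rfl, h₁, h₂⟩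
  · exact .inl h
  · rcases infix_cons_iff.1 h with h | h
    · rcases prefix_cons_iff.1 h with rfl | ⟨t, rfl, -⟩
      · exact .inl nil_infix
      · exact .inr (.inr mem_cons_self)
    · exact .inr (.inl h)
  · rcases prefix_cons_iff.1 h₂ with rfl | ⟨t, rfl, -⟩
    · exact .inl (by simpa using h₁.isInfix)
    · exact .inr (.inr (by simp))

theorem consecutive_triple_infix {α : Type*} (l : List α) (k : ℕ) (h : k + 2 < l.length) :
    [l[k], l[k + 1], l[k + 2]] <:+: l := by
  refine ⟨l.take k, l.drop (k + 3), ?_⟩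
  conv_rhs => rw [← l.take_append_drop k, drop_eq_getElem_cons (by omega),
    drop_eq_getElem_cons (by omega), drop_eq_getElem_cons (by omega)]
  simp

end List

namespace BTree

def inorder : BTree → List ℕ
  | .nil => []
  | .node v a b => a.inorder ++ v :: b.inorder

theorem mem_inorder_iff_memB {t : BTree} {x : ℕ} : x ∈ t.inorder ↔ t.memB x = true := by
  induction t with
  | nil => simp [inorder, memB]
  | node v a b ha hb => simp [inorder, memB, ha, hb]; tauto

theorem ancB_node {v x y : ℕ} {a b : BTree} :
    (node v a b).ancB x y = true ↔
      x = v ∧ (y ∈ a.inorder ∨ y ∈ b.inorder) ∨ a.ancB x y = true ∨ b.ancB x y = true := by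
  simp [ancB, mem_inorder_iff_memB, or_assoc]

theorem mem_inorder_of_ancB {t : BTree} {x y : ℕ} (h : t.ancB x y = true) :
    x ∈ t.inorder ∧ y ∈ t.inorder := by
  induction t with
  | nil => simp [ancB] at h
  | node v a b ha hb =>
    simp only [ancB_node] at h
    simp only [inorder, List.mem_append, List.mem_cons]
    grind

theorem ancB_asymm {t : BTree} (hnd : t.inorder.Nodup) {x y : ℕ} (h : t.ancB x y = true) :
    t.ancB y x = false := by
  induction t with
  | nil => simp [ancB] at h
  | node v a b ha hb =>
    simp only [inorder, List.nodup_append, List.nodup_cons] at hnd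
    rw [← Bool.not_eq_true, ancB_node]
    rw [ancB_node] at h
    grind [mem_inorder_of_ancB]

theorem exists_ancB_of_infix {s : List ℕ} (hs : s ≠ []) {t : BTree} (h : s <:+: t.inorder) :
    ∃ x ∈ s, ∀ y ∈ s, y ≠ x → t.ancB x y = true := by
  induction t with
  | nil => exact absurd (List.eq_nil_of_infix_nil h) hs
  | node v a b iha ihb =>
    simp only [ancB_node]
    rcases List.infix_or_infix_or_mem_of_infix_append_cons h with h | h | hv
    · obtain ⟨x, hx, hanc⟩ := iha h
      exact ⟨x, hx, fun y hy hne => .inr (.inl (hanc y hy hne))⟩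
    · obtain ⟨x, hx, hanc⟩ := ihb h
      exact ⟨x, hx, fun y hy hne => .inr (.inr (hanc y hy hne))⟩
    · refine ⟨v, hv, fun y hy hne => .inl ⟨rfl, ?_⟩⟩
      simpa [inorder, hne] using h.subset hy

theorem existsUnique_ancB_of_infix {s : List ℕ} (hs : s ≠ []) {t : BTree}
    (hnd : t.inorder.Nodup) (h : s <:+: t.inorder) :
    ∃! x, x ∈ s ∧ ∀ y ∈ s, y ≠ x → t.ancB x y = true := by
  obtain ⟨x, hx, hanc⟩ := exists_ancB_of_infix hs h
  refine ⟨x, ⟨hx, hanc⟩, fun x' ⟨hx', hanc'⟩ => by_contra fun hne => ?_⟩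
  exact Bool.false_ne_true
    ((ancB_asymm hnd (hanc x' hx' hne)).symm.trans (hanc' x hx (Ne.symm hne)))

end BTree

theorem findIdx_isExtreme_lt_length {l : List ℕ} (hl : l ≠ []) :
    l.findIdx (isExtreme l) < l.length := by
  obtain ⟨m, hm⟩ := Option.isSome_iff_exists.1 (List.isSome_min?_of_ne_nil hl)
  exact List.findIdx_lt_length_of_exists ⟨m, List.min?_mem hm, by simp [isExtreme, hm]⟩

theorem inorder_mmAux {fuel : ℕ} {l : List ℕ} (h : l.length ≤ fuel) :
    (mmAux fuel l).inorder = l := by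
  induction fuel generalizing l with
  | zero => simp_all [mmAux, BTree.inorder]
  | succ f ih =>
    rcases eq_or_ne l [] with rfl | hl
    · simp [mmAux, BTree.inorder]
    have hk := findIdx_isExtreme_lt_length hl
    simp only [mmAux, List.isEmpty_iff, hl, if_false, BTree.inorder]
    rw [ih (by simp; omega), ih (by simp; omega), List.getD_eq_getElem _ _ hk,
      ← List.drop_eq_getElem_cons hk, List.take_append_drop]

theorem inorder_minmaxTree (l : List ℕ) : (minmaxTree l).inorder = l :=
  inorder_mmAux le_rfl

theorem nodup_permList (n : ℕ) (p : Equiv.Perm (Fin n)) : (permList n p).Nodup :=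
  List.nodup_ofFn.2 fun _ _ h => p.injective (Fin.ext (Nat.succ_injective h))

theorem consecutive_entryAt_infix_permList {n i : ℕ} (p : Equiv.Perm (Fin n)) (hi1 : 1 ≤ i)
    (hi2 : i + 2 ≤ n) :
    [entryAt n p i, entryAt n p (i + 1), entryAt n p (i + 2)] <:+: permList n p := by
  obtain ⟨k, rfl⟩ : ∃ k, i = k + 1 := ⟨i - 1, by omega⟩
  have hk : k + 2 < (permList n p).length := by rw [permList, List.length_ofFn]; omega
  convert List.consecutive_triple_infix _ k hk using 3 <;> grind [entryAt]

theorem local_extremum_exists_unique_general (n : ℕ) (i : ℕ) (hi1 : 1 ≤ i)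
    (hi2 : i ≤ n - 2) (p : Equiv.Perm (Fin n)) :
    ∃! x, x ∈ [entryAt n p i, entryAt n p (i + 1), entryAt n p (i + 2)] ∧
      ∀ y ∈ [entryAt n p i, entryAt n p (i + 1), entryAt n p (i + 2)], y ≠ x →
        (minmaxTree (permList n p)).ancB x y = true := by
  refine BTree.existsUnique_ancB_of_infix (List.cons_ne_nil _ _) ?_ ?_ <;>
    rw [inorder_minmaxTree]
  · exact nodup_permList n p
  · exact consecutive_entryAt_infix_permList p hi1 (by omega)

/-- For `n ≥ 3` and `1 ≤ i ≤ n − 2`, in every permutation `p` of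
`{1,…,n}` exactly one of the three entries `p_i, p_{i+1}, p_{i+2}` is an ancestor in
the minmax tree of the other two (the `i`-th local extremum `e_i` of `p`). -/
theorem local_extremum_exists_unique (n : ℕ) (hn : 3 ≤ n) (i : ℕ) (hi1 : 1 ≤ i)
    (hi2 : i ≤ n - 2) (p : Equiv.Perm (Fin n)) :
    ∃! x, x ∈ [entryAt n p i, entryAt n p (i + 1), entryAt n p (i + 2)] ∧
      ∀ y ∈ [entryAt n p i, entryAt n p (i + 1), entryAt n p (i + 2)], y ≠ x →
        (minmaxTree (permList n p)).ancB x y = true :=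
  local_extremum_exists_unique_general n i hi1 hi2 p
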